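/- arXiv:quant-ph/0209052 — 5 statements merged into one kernel-verified Lean document; each statement's English description precedes it below -/
import Mathlib

section
/- Let ν be a probability distribution over deterministic error-free lhv models, and suppose every a-monochromatic rectangle R satisfies |R ∩ D| ≤ r(P). Then the probability q that all n detectors click, for an input chosen uniformly from D, satisfies q ≤ dⁿ·r(P)/|D|. Consequently the maximum detector efficiency η* with ηⁿ = q satisfies η* ≤ d·(r(P)/|D|)^{1/n}. -/
/-- For a probability distribution `ν` over deterministic error-free lhv models,
if every `a`-monochromatic rectangle has `|R ∩ D| ≤ r`, then the probability `q`
that all detectors click (uniform input from `D`) satisfies `q ≤ d^n r / |D|`,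
whence the detector efficiency `η` with `η^n = q` satisfies `η ≤ d (r/|D|)^(1/n)`. -/
theorem stmt3 (n k d : ℕ) (hn : 1 ≤ n)
    (P : (Fin n → Fin k) → (Fin n → Fin d) → ℝ)
    (D : Finset (Fin n → Fin k)) (hD : D.Nonempty)
    (r : ℕ)
    (hmono : ∀ (a : Fin n → Fin d) (R : Fin n → Finset (Fin k)),
      (∀ X ∈ Fintype.piFinset R ∩ D, 0 < P X a) → (Fintype.piFinset R ∩ D).card ≤ r)
    (ν : (Fin n → Fin k → Option (Fin d)) → ℝ)
    (hν0 : ∀ lam, 0 ≤ ν lam) (hν1 : ∑ lam, ν lam = 1)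
    (herrfree : ∀ lam, 0 < ν lam → ∀ X ∈ D, ∀ a : Fin n → Fin d,
      (∀ i, lam i (X i) = some (a i)) → 0 < P X a)
    (q : ℝ)
    (hq : q = (1 / (D.card : ℝ)) * ∑ X ∈ D, ∑ lam, ν lam *
      (if ∀ i, lam i (X i) ≠ none then 1 else 0))
    (η : ℝ) (hη : 0 ≤ η) (hηq : η ^ n = q) :
    q ≤ (d : ℝ) ^ n * r / D.card ∧ η ≤ d * ((r : ℝ) / D.card) ^ ((1 : ℝ) / n) := by
  have hDc : (0 : ℝ) < D.card := by exact_mod_cast Finset.card_pos.mpr hD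
  -- count bound for each lam with positive weight
  have hcount : ∀ lam, 0 < ν lam →
      ((D.filter fun X => ∀ i, lam i (X i) ≠ none).card : ℕ) ≤ d ^ n * r := by
    intro lam hlam
    have hsub : D.filter (fun X => ∀ i, lam i (X i) ≠ none) ⊆
        Finset.univ.biUnion (fun a : Fin n → Fin d =>
          (Fintype.piFinset fun i => Finset.univ.filter fun x => lam i x = some (a i)) ∩ D) := by
      intro X hX
      rw [Finset.mem_filter] at hX
      obtain ⟨hXD, hcl⟩ := hX
      have hs : ∀ i, (lam i (X i)).isSome := fun i => Option.isSome_iff_ne_none.mpr (hcl i)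
      refine Finset.mem_biUnion.mpr ⟨fun i => (lam i (X i)).get (hs i), Finset.mem_univ _, ?_⟩
      refine Finset.mem_inter.mpr ⟨?_, hXD⟩
      rw [Fintype.mem_piFinset]
      intro i
      simp [Option.some_get]
    calc (D.filter fun X => ∀ i, lam i (X i) ≠ none).card
        ≤ _ := Finset.card_le_card hsub
      _ ≤ ∑ a : Fin n → Fin d, ((Fintype.piFinset fun i =>
            Finset.univ.filter fun x => lam i x = some (a i)) ∩ D).card :=
          Finset.card_biUnion_le
      _ ≤ ∑ _a : Fin n → Fin d, r := by
          refine Finset.sum_le_sum fun a _ => ?_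
          refine hmono a _ fun X hX => ?_
          rw [Finset.mem_inter, Fintype.mem_piFinset] at hX
          refine herrfree lam hlam X hX.2 a fun i => ?_
          have := hX.1 i
          simpa using this
      _ = d ^ n * r := by simp [Finset.card_univ, mul_comm]
  -- rewrite q
  have hswap : ∑ X ∈ D, ∑ lam, ν lam * (if ∀ i, lam i (X i) ≠ none then 1 else 0)
      = ∑ lam, ν lam * ((D.filter fun X => ∀ i, lam i (X i) ≠ none).card : ℝ) := by
    rw [Finset.sum_comm]
    refine Finset.sum_congr rfl fun lam _ => ?_
    rw [← Finset.mul_sum, Finset.sum_boole]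
  have hq1 : q ≤ (d : ℝ) ^ n * r / D.card := by
    rw [hq, hswap]
    have hsumle : ∑ lam, ν lam * ((D.filter fun X => ∀ i, lam i (X i) ≠ none).card : ℝ)
        ≤ ∑ lam, ν lam * ((d : ℝ) ^ n * r) := by
      refine Finset.sum_le_sum fun lam _ => ?_
      rcases lt_or_eq_of_le (hν0 lam) with hpos | hzero
      · refine mul_le_mul_of_nonneg_left ?_ (hν0 lam)
        have := hcount lam hpos
        calc ((D.filter fun X => ∀ i, lam i (X i) ≠ none).card : ℝ)
            ≤ ((d ^ n * r : ℕ) : ℝ) := by exact_mod_cast this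
          _ = (d : ℝ) ^ n * r := by push_cast; ring
      · simp [← hzero]
    calc (1 / (D.card : ℝ)) * ∑ lam, ν lam * ((D.filter fun X => ∀ i, lam i (X i) ≠ none).card : ℝ)
        ≤ (1 / (D.card : ℝ)) * ∑ lam, ν lam * ((d : ℝ) ^ n * r) := by
          exact mul_le_mul_of_nonneg_left hsumle (by positivity)
      _ = (d : ℝ) ^ n * r / D.card := by
          rw [← Finset.sum_mul, hν1]; ring
  refine ⟨hq1, ?_⟩
  have hn0 : (n : ℝ) ≠ 0 := Nat.cast_ne_zero.mpr (by omega)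
  have hrd : (0 : ℝ) ≤ (r : ℝ) / D.card := by positivity
  have hrhs : ((d : ℝ) * ((r : ℝ) / D.card) ^ ((1 : ℝ) / n)) ^ n
      = (d : ℝ) ^ n * r / D.card := by
    rw [mul_pow, ← Real.rpow_natCast (((r : ℝ) / D.card) ^ ((1 : ℝ) / n)) n,
      ← Real.rpow_mul hrd, one_div_mul_cancel hn0, Real.rpow_one]
    ring
  have hpow : η ^ n ≤ ((d : ℝ) * ((r : ℝ) / D.card) ^ ((1 : ℝ) / n)) ^ n := by
    rw [hrhs, hηq]; exact hq1
  have hrhs0 : (0 : ℝ) ≤ (d : ℝ) * ((r : ℝ) / D.card) ^ ((1 : ℝ) / n) := by positivity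
  exact (pow_le_pow_iff_left₀ hη hrhs0 (by omega)).mp hpow
end

section
/- If there is a classical protocol with shared randomness using c bits of communication that perfectly reproduces an (n,k,d) correlation problem P with promise D, then there exists an lhv model (with detector no-click outputs allowed) in which the probability that all n detectors click is 2^{-c} independently of the input, and which produces the correct conditional output distribution given that all detectors click. Hence η*ⁿ ≥ 2^{-R^{pub}(P)}. -/
/-!
Use the shared randomness to pick a deterministic protocol `ω` and, uniformly and independently,
one of its `2^c` conversations `t`. Party `i` clicks iff its input is consistent with `t`, in which
case it outputs what the protocol prescribes at `t`. Since the conversations of `ω` are rectangles,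
all parties click exactly when `t` is the conversation that `ω` actually produces on the joint
input, which happens with probability `2^{-c}`; conditioned on that, the outputs are those of the
protocol.
-/

open Finset

theorem mem_univ_pi_iff_forall_exists_eval_eq {ι : Type*} {α : ι → Type*}
    {R : ∀ i, Set (α i)} {x : ∀ i, α i} :
    x ∈ Set.univ.pi R ↔ ∀ i, ∃ y ∈ Set.univ.pi R, y i = x i :=
  ⟨fun hx _ => ⟨x, hx, rfl⟩, fun h i _ => by
    obtain ⟨y, hy, hyx⟩ := h i
    exact hyx ▸ hy i (Set.mem_univ i)⟩

section LocalModel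

variable {ι X A Ω T : Type*}

def HasRectangularConversations (conv : (ι → X) → T) : Prop :=
  ∀ t, ∃ R : ι → Set X, {x | conv x = t} = Set.univ.pi R

theorem HasRectangularConversations.forall_exists_eq_iff {conv : (ι → X) → T}
    (h : HasRectangularConversations conv) (t : T) (x : ι → X) :
    (∀ i, ∃ y, conv y = t ∧ y i = x i) ↔ conv x = t := by
  obtain ⟨R, hR⟩ := h t
  have hmem : ∀ y, conv y = t ↔ y ∈ Set.univ.pi R := fun y => Set.ext_iff.mp hR y
  simp only [hmem]
  exact mem_univ_pi_iff_forall_exists_eval_eq.symm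

open Classical in
/-- `none` encodes a detector that does not click. -/
noncomputable def conversationResponse (conv : Ω → (ι → X) → T) (out : Ω → ι → T → X → A)
    (p : Ω × T) (i : ι) (x : X) : Option A :=
  if ∃ y, conv p.1 y = p.2 ∧ y i = x then some (out p.1 i p.2 x) else none

variable {conv : Ω → (ι → X) → T} {out : Ω → ι → T → X → A}

theorem forall_conversationResponse_ne_none_iff
    (hrect : ∀ ω, HasRectangularConversations (conv ω)) (p : Ω × T) (x : ι → X) :
    (∀ i, conversationResponse conv out p i (x i) ≠ none) ↔ conv p.1 x = p.2 := by
  simp only [conversationResponse, ne_eq, ite_eq_right_iff, reduceCtorEq, imp_false, not_not]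
  exact (hrect p.1).forall_exists_eq_iff p.2 x

theorem forall_conversationResponse_eq_some_iff
    (hrect : ∀ ω, HasRectangularConversations (conv ω)) (p : Ω × T) (x : ι → X) (a : ι → A) :
    (∀ i, conversationResponse conv out p i (x i) = some (a i)) ↔
      conv p.1 x = p.2 ∧ ∀ i, out p.1 i p.2 (x i) = a i := by
  simp only [conversationResponse, Option.ite_none_right_eq_some, Option.some.injEq, forall_and]
  rw [(hrect p.1).forall_exists_eq_iff]

variable [Fintype Ω] [Fintype T]

noncomputable def conversationWeight (μ : Ω → ℝ) (p : Ω × T) : ℝ :=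
  μ p.1 / Fintype.card T

theorem sum_conversationWeight [Nonempty T] (μ : Ω → ℝ) :
    ∑ p : Ω × T, conversationWeight μ p = ∑ ω, μ ω := by
  have : (Fintype.card T : ℝ) ≠ 0 := Nat.cast_ne_zero.mpr Fintype.card_ne_zero
  simp only [conversationWeight, Fintype.sum_prod_type, sum_const, card_univ, nsmul_eq_mul,
    mul_div_cancel₀ _ this]

theorem sum_conversationWeight_mul_ite_eq (μ : Ω → ℝ) (x : ι → X) (Q : Ω → T → Prop)
    [DecidableEq T] [∀ ω t, Decidable (Q ω t)] :
    ∑ p : Ω × T, conversationWeight μ p * (if conv p.1 x = p.2 ∧ Q p.1 p.2 then 1 else 0) =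
      (∑ ω, μ ω * if Q ω (conv ω x) then 1 else 0) / Fintype.card T := by
  rw [Fintype.sum_prod_type, sum_div]
  refine sum_congr rfl fun ω _ => ?_
  simp only [conversationWeight, ite_and, mul_ite, mul_zero, sum_ite_eq, mem_univ, if_true]
  split_ifs <;> simp

theorem sum_conversationWeight_mul_ite_forall_ne_none
    (hrect : ∀ ω, HasRectangularConversations (conv ω)) (μ : Ω → ℝ) (x : ι → X)
    [∀ p : Ω × T, Decidable (∀ i, conversationResponse conv out p i (x i) ≠ none)] :
    ∑ p : Ω × T, conversationWeight μ p *
        (if ∀ i, conversationResponse conv out p i (x i) ≠ none then 1 else 0) =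
      (∑ ω, μ ω) / Fintype.card T := by
  classical
  simpa only [forall_conversationResponse_ne_none_iff hrect, and_true, if_true, mul_one] using
    sum_conversationWeight_mul_ite_eq (conv := conv) (T := T) μ x fun _ _ => True

theorem sum_conversationWeight_mul_ite_forall_eq_some
    (hrect : ∀ ω, HasRectangularConversations (conv ω)) (μ : Ω → ℝ) (x : ι → X) (a : ι → A)
    [∀ p : Ω × T, Decidable (∀ i, conversationResponse conv out p i (x i) = some (a i))]
    [∀ ω, Decidable (∀ i, out ω i (conv ω x) (x i) = a i)] :
    ∑ p : Ω × T, conversationWeight μ p *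
        (if ∀ i, conversationResponse conv out p i (x i) = some (a i) then 1 else 0) =
      (∑ ω, μ ω * if ∀ i, out ω i (conv ω x) (x i) = a i then 1 else 0) / Fintype.card T := by
  classical
  simp only [forall_conversationResponse_eq_some_iff hrect]
  convert sum_conversationWeight_mul_ite_eq μ x fun ω t => ∀ i, out ω i t (x i) = a i

end LocalModel

/-- A shared-randomness protocol with `c` bits of communication that perfectly
reproduces the correlation problem `P` on `D` yields an lhv model (with no-click
outputs `none`) in which the probability that all detectors click equals `2^{-c}`
independently of the input, and which reproduces the correct conditional output
distribution given that all detectors click. Hence `η*ⁿ ≥ 2^{-R^pub(P)}`. -/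
theorem stmt6 (n k d c : ℕ)
    (P : (Fin n → Fin k) → (Fin n → Fin d) → ℝ)
    (D : Set (Fin n → Fin k))
    (Ω : Type) [Fintype Ω] (μ : Ω → ℝ)
    (hμ0 : ∀ ω, 0 ≤ μ ω) (hμ1 : ∑ ω, μ ω = 1)
    (conv : Ω → (Fin n → Fin k) → Fin (2 ^ c))
    (out : Ω → (i : Fin n) → Fin (2 ^ c) → Fin k → Fin d)
    (hrect : ∀ ω t, ∃ R : Fin n → Set (Fin k), {X | conv ω X = t} = Set.univ.pi R)
    (hrepr : ∀ X ∈ D, ∀ a : Fin n → Fin d,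
      P X a = ∑ ω, μ ω * (if ∀ i, out ω i (conv ω X) (X i) = a i then 1 else 0)) :
    ∃ (N : ℕ) (μ' : Fin N → ℝ) (lam : Fin N → Fin n → Fin k → Option (Fin d)),
      (∀ ω', 0 ≤ μ' ω') ∧ (∑ ω', μ' ω') = 1 ∧
      (∀ X ∈ D, ∑ ω', μ' ω' * (if ∀ i, lam ω' i (X i) ≠ none then 1 else 0)
          = (2 : ℝ) ^ (-(c : ℝ))) ∧
      (∀ X ∈ D, ∀ a : Fin n → Fin d,
        ∑ ω', μ' ω' * (if ∀ i, lam ω' i (X i) = some (a i) then 1 else 0)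
          = (2 : ℝ) ^ (-(c : ℝ)) * P X a) := by
  have hr : (2 : ℝ) ^ (-(c : ℝ)) = (Fintype.card (Fin (2 ^ c)) : ℝ)⁻¹ := by
    rw [Real.rpow_neg zero_le_two, Real.rpow_natCast, Fintype.card_fin, Nat.cast_pow,
      Nat.cast_ofNat]
  have hrect' : ∀ ω, HasRectangularConversations (conv ω) := hrect
  let e := Fintype.equivFin (Ω × Fin (2 ^ c))
  refine ⟨_, conversationWeight μ ∘ e.symm, conversationResponse conv out ∘ e.symm,
    fun j => div_nonneg (hμ0 _) (Nat.cast_nonneg _), ?_, fun X _ => ?_, fun X hX a => ?_⟩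
  all_goals simp only [← e.sum_comp, Function.comp_apply, Equiv.symm_apply_apply]
  · rw [sum_conversationWeight, hμ1]
  · rw [sum_conversationWeight_mul_ite_forall_ne_none hrect', hμ1, hr, one_div]
  · rw [sum_conversationWeight_mul_ite_forall_eq_some hrect', hrepr X hX a, hr, inv_mul_eq_div]
end

section
/- For the GHZ-type state |ψ⟩ = (|0ⁿ⟩ + |1ⁿ⟩)/√2 with each party applying the phase |1⟩ ↦ exp(2πi Xᵢ/2^l)|1⟩ and measuring in the basis (|0⟩ ± |1⟩)/√2 (outcome aᵢ ∈ {0,1}), the quantum probability of outcome a given input X with (Σᵢ Xᵢ) mod 2^{l−1} = 0 is nonzero only if (Σᵢ aᵢ) mod 2 = ((Σᵢ Xᵢ) mod 2^l)/2^{l−1}. Equivalently (as a trigonometric identity): (1 + cos(2π Σᵢ Xᵢ/2^l + π Σᵢ aᵢ))/2 = 0 whenever (Σᵢ aᵢ) mod 2 ≠ ((Σᵢ Xᵢ) mod 2^l)/2^{l−1} and 2^{l−1} divides Σᵢ Xᵢ. -/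
/-!
Write `Σ Xᵢ = 2^{l-1} k`. The phase `2π Σ Xᵢ / 2^l` is then `k π`, and the right-hand side of the
hypothesis on `a` is `k mod 2`, so the hypothesis says that `k + Σ aᵢ` is odd and the cosine equals
`cos ((k + Σ aᵢ) π) = -1`.
-/

open Real

theorem Nat.mod_two_pow_div_two_pow_pred {l : ℕ} (hl : 1 ≤ l) (S : ℕ) :
    S % 2 ^ l / 2 ^ (l - 1) = S / 2 ^ (l - 1) % 2 := by
  rw [← pow_sub_one_mul (by omega : l ≠ 0), Nat.mod_mul_right_div_self]

theorem Real.two_pi_mul_div_two_pow_of_dvd {l S : ℕ} (hl : 1 ≤ l) (hdiv : 2 ^ (l - 1) ∣ S) :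
    2 * π * S / 2 ^ l = (S / 2 ^ (l - 1) : ℕ) * π := by
  obtain ⟨k, rfl⟩ := hdiv
  rw [Nat.mul_div_cancel_left k (by positivity), ← pow_sub_one_mul (by omega : l ≠ 0)]
  push_cast
  field_simp

theorem Real.cos_nat_mul_pi_of_odd {N : ℕ} (hN : Odd N) : cos (N * π) = -1 := by
  rw [cos_nat_mul_pi, hN.neg_one_pow]

theorem stmt9_general (n l : ℕ) (hl : 1 ≤ l) (X : Fin n → ℕ)
    (a : Fin n → Fin 2)
    (hdiv : 2 ^ (l - 1) ∣ ∑ i, X i)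
    (hne : (∑ i, (a i : ℕ)) % 2 ≠ ((∑ i, X i) % 2 ^ l) / 2 ^ (l - 1)) :
    (1 + Real.cos (2 * Real.pi * (∑ i, (X i : ℕ)) / 2 ^ l
      + Real.pi * (∑ i, (a i : ℕ)))) / 2 = 0 := by
  set k := (∑ i, X i) / 2 ^ (l - 1)
  set A := ∑ i, (a i : ℕ)
  rw [Nat.mod_two_pow_div_two_pow_pred hl] at hne
  have hodd : Odd (k + A) := Nat.odd_iff.mpr (by omega)
  have hphase : 2 * Real.pi * (∑ i, X i : ℕ) / 2 ^ l + Real.pi * A = (k + A : ℕ) * Real.pi := by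
    rw [Real.two_pi_mul_div_two_pow_of_dvd hl hdiv]
    push_cast
    ring
  rw [hphase, Real.cos_nat_mul_pi_of_odd hodd]
  norm_num

/-- GHZ outcome probabilities: if `2^{l−1} ∣ Σ Xᵢ` and
`(Σ aᵢ) mod 2 ≠ ((Σ Xᵢ) mod 2^l) / 2^{l−1}`, then the quantum probability
`(1 + cos(2π Σ Xᵢ / 2^l + π Σ aᵢ)) / 2` vanishes. -/
theorem stmt9 (n l : ℕ) (hl : 1 ≤ l) (X : Fin n → ℕ) (hX : ∀ i, X i < 2 ^ l)
    (a : Fin n → Fin 2)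
    (hdiv : 2 ^ (l - 1) ∣ ∑ i, X i)
    (hne : (∑ i, (a i : ℕ)) % 2 ≠ ((∑ i, X i) % 2 ^ l) / 2 ^ (l - 1)) :
    (1 + Real.cos (2 * Real.pi * (∑ i, (X i : ℕ)) / 2 ^ l
      + Real.pi * (∑ i, (a i : ℕ)))) / 2 = 0 :=
  stmt9_general n l hl X a hdiv hne
end

section
/- For b ∈ {0,1} and a rectangle R = R₁ × ⋯ × Rₙ ⊆ ({0,...,2^l−1})ⁿ with R ∩ D ≠ ∅ such that every X ∈ R ∩ D satisfies ((Σᵢ Xᵢ) mod 2^l)/2^{l−1} = b, the size of R satisfies |R| ≤ ((2^l − 2)/n + 1)ⁿ. -/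
open Finset
open scoped Pointwise

namespace Stmt11Aux

instance inst2l (l : ℕ) : NeZero (2 ^ l) := ⟨pow_ne_zero _ two_ne_zero⟩

variable {l : ℕ}

lemma two_pow_split (hl : 1 ≤ l) : 2 ^ (l - 1) + 2 ^ (l - 1) = 2 ^ l := by
  have h : l - 1 + 1 = l := by omega
  calc 2 ^ (l - 1) + 2 ^ (l - 1) = 2 ^ (l - 1) * 2 := by ring
  _ = 2 ^ (l - 1 + 1) := (pow_succ 2 (l - 1)).symm
  _ = 2 ^ l := by rw [h]

/-- the unique element of order two -/
def hh (l : ℕ) : ZMod (2 ^ l) := ((2 ^ (l - 1) : ℕ) : ZMod (2 ^ l))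

lemma hh_ne_zero (hl : 1 ≤ l) : hh l ≠ 0 := by
  intro h
  have := (ZMod.natCast_eq_zero_iff _ _).mp h
  have h1 : 2 ^ (l - 1) < 2 ^ l := pow_lt_pow_right₀ one_lt_two (by omega)
  have h2 : 0 < 2 ^ (l - 1) := pow_pos two_pos _
  exact absurd (Nat.le_of_dvd h2 this) (by omega)

lemma hh_add_hh (hl : 1 ≤ l) : hh l + hh l = 0 := by
  have : ((2 ^ (l - 1) : ℕ) : ZMod (2 ^ l)) + ((2 ^ (l - 1) : ℕ) : ZMod (2 ^ l))
      = ((2 ^ (l - 1) + 2 ^ (l - 1) : ℕ) : ZMod (2 ^ l)) := by push_cast; ring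
  rw [hh, this, two_pow_split hl, ZMod.natCast_self]

/-- unique element of order 2 -/
lemma eq_hh_of_two_nsmul_eq_zero (hl : 1 ≤ l) (x : ZMod (2 ^ l)) (h2 : x + x = 0)
    (h0 : x ≠ 0) : x = hh l := by
  have hv : (x.val + x.val) % 2 ^ l = 0 := by
    have := ZMod.val_add x x
    rw [h2, ZMod.val_zero] at this
    omega
  have hdvd : 2 ^ l ∣ x.val + x.val := Nat.dvd_of_mod_eq_zero hv
  have hx : x.val < 2 ^ l := ZMod.val_lt x
  have hxx : ((x.val : ℕ) : ZMod (2 ^ l)) = x := ZMod.natCast_rightInverse x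
  have hxne : x.val ≠ 0 := fun h => h0 (by rw [← hxx, h, Nat.cast_zero])
  have hP := two_pow_split hl
  set P := 2 ^ (l - 1) with hPdef
  have hPpos : 0 < P := pow_pos two_pos _
  rcases hdvd with ⟨c, hc⟩
  -- x.val + x.val = (P + P) * c  ⇒  x.val = P * c
  have hvc : x.val = P * c := by
    have h1 : x.val + x.val = (P + P) * c := by rw [hP]; exact hc
    nlinarith
  have hc1 : c = 1 := by
    rcases Nat.lt_or_ge c 2 with h | h
    · interval_cases c <;> omega
    · nlinarith
  have hvP : x.val = P := by rw [hvc, hc1, Nat.mul_one]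
  rw [← hxx, hvP]; rfl

/-- every nonzero element generates a subgroup containing hh -/
lemma exists_nsmul_eq_hh (hl : 1 ≤ l) (d : ZMod (2 ^ l)) (hd : d ≠ 0) :
    ∃ k : ℕ, k • d = hh l := by
  have hord : addOrderOf d ∣ 2 ^ l := by
    have := addOrderOf_dvd_card (x := d)
    rwa [ZMod.card] at this
  rcases (Nat.dvd_prime_pow Nat.prime_two).mp hord with ⟨m, hm, hmeq⟩
  have hm1 : 1 ≤ m := by
    by_contra h
    have hm0 : m = 0 := by omega
    rw [hm0, pow_zero] at hmeq
    exact hd (AddMonoid.addOrderOf_eq_one_iff.mp hmeq)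
  refine ⟨2 ^ (m - 1), ?_⟩
  set x := (2 ^ (m - 1)) • d with hxdef
  have hxx : x + x = 0 := by
    have h1 : x + x = (2 ^ (m - 1) + 2 ^ (m - 1)) • d := by rw [add_nsmul]
    rw [h1, two_pow_split hm1, ← hmeq, addOrderOf_nsmul_eq_zero]
  have hx0 : x ≠ 0 := by
    intro h
    have hdv := addOrderOf_dvd_of_nsmul_eq_zero h
    rw [hmeq] at hdv
    have hle := Nat.le_of_dvd (pow_pos two_pos _) hdv
    have h4 : (2:ℕ) ^ (m - 1) < 2 ^ m := pow_lt_pow_right₀ one_lt_two (by omega)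
    omega
  exact eq_hh_of_two_nsmul_eq_zero hl x hxx hx0


/-- transformed A -/
def TA (A B : Finset (ZMod (2 ^ l))) (e : ZMod (2 ^ l)) : Finset (ZMod (2 ^ l)) :=
  A ∪ B.image (· + e)

/-- transformed B -/
def TB (A B : Finset (ZMod (2 ^ l))) (e : ZMod (2 ^ l)) : Finset (ZMod (2 ^ l)) :=
  B.filter (fun x => x + e ∈ A)

lemma trans_subset (A B : Finset (ZMod (2 ^ l))) (e : ZMod (2 ^ l)) :
    TA A B e + TB A B e ⊆ A + B := by
  intro z hz
  rw [Finset.mem_add] at hz ⊢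
  obtain ⟨u, hu, v, hv, rfl⟩ := hz
  rw [TB, Finset.mem_filter] at hv
  rw [TA, Finset.mem_union] at hu
  rcases hu with hu | hu
  · exact ⟨u, hu, v, hv.1, rfl⟩
  · rw [Finset.mem_image] at hu
    obtain ⟨b, hb, rfl⟩ := hu
    exact ⟨v + e, hv.2, b, hb, by ring⟩

lemma trans_card (A B : Finset (ZMod (2 ^ l))) (e : ZMod (2 ^ l)) :
    (TA A B e).card + (TB A B e).card = A.card + B.card := by
  have hinj : Function.Injective (· + e) := add_left_injective e
  have hkey : A ∩ B.image (· + e) = (TB A B e).image (· + e) := by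
    ext z
    simp only [Finset.mem_inter, Finset.mem_image, TB, Finset.mem_filter]
    constructor
    · rintro ⟨hzA, b, hb, rfl⟩
      exact ⟨b, ⟨hb, hzA⟩, rfl⟩
    · rintro ⟨b, ⟨hb, hbA⟩, rfl⟩
      exact ⟨hbA, b, hb, rfl⟩
  have h1 := Finset.card_union_add_card_inter A (B.image (· + e))
  rw [hkey, Finset.card_image_of_injective _ hinj] at h1
  have h2 : (B.image (· + e)).card = B.card := Finset.card_image_of_injective _ hinj
  rw [h2] at h1
  rw [TA]
  omega

lemma iterate_mem (A : Finset (ZMod (2 ^ l))) (d : ZMod (2 ^ l))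
    (hstep : ∀ a ∈ A, a + d ∈ A) : ∀ (k : ℕ), ∀ a ∈ A, a + k • d ∈ A := by
  intro k
  induction k with
  | zero => intro a ha; simpa using ha
  | succ k ihk =>
    intro a ha
    have h1 := hstep _ (ihk a ha)
    rw [succ_nsmul, ← add_assoc]
    exact h1

theorem kneser2 (hl : 1 ≤ l) :
    ∀ (m : ℕ) (A B : Finset (ZMod (2 ^ l))), B.card ≤ m → A.Nonempty → B.Nonempty →
      ¬ (∀ s ∈ A + B, s + hh l ∈ A + B) → A.card + B.card ≤ (A + B).card + 1 := by
  intro m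
  induction m with
  | zero =>
    intro A B hBm hA hB _
    rw [Nat.le_zero, Finset.card_eq_zero] at hBm
    exact absurd hBm hB.ne_empty
  | succ m ih =>
    intro A B hBm hA hB hnp
    have hB1 : 1 ≤ B.card := hB.card_pos
    rcases eq_or_lt_of_le hB1 with hcard1 | hcard2
    · -- |B| = 1
      obtain ⟨b, rfl⟩ := Finset.card_eq_one.mp hcard1.symm
      have himg : A + {b} = A.image (· + b) := by
        ext z
        simp only [Finset.mem_add, Finset.mem_singleton, Finset.mem_image]
        constructor
        · rintro ⟨y, hy, w, rfl, rfl⟩; exact ⟨y, hy, rfl⟩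
        · rintro ⟨y, hy, rfl⟩; exact ⟨y, hy, b, rfl, rfl⟩
      rw [himg, Finset.card_image_of_injective _ (add_left_injective b), Finset.card_singleton]
    · -- |B| ≥ 2
      by_cases hex : ∃ a ∈ A, ∃ b₀ ∈ B, ∃ b₁ ∈ B, a + b₁ - b₀ ∉ A ∧
          ¬ (∀ s ∈ TA A B (a - b₀) + TB A B (a - b₀),
              s + hh l ∈ TA A B (a - b₀) + TB A B (a - b₀))
      · obtain ⟨a, ha, b₀, hb₀, b₁, hb₁, hna, hnp'⟩ := hex
        set e := a - b₀ with he
        have hb₀TB : b₀ ∈ TB A B e := by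
          rw [TB, Finset.mem_filter]
          refine ⟨hb₀, ?_⟩
          have : b₀ + e = a := by rw [he]; ring
          rwa [this]
        have hb₁TB : b₁ ∉ TB A B e := by
          rw [TB, Finset.mem_filter]
          rintro ⟨-, hmem⟩
          have : b₁ + e = a + b₁ - b₀ := by rw [he]; ring
          rw [this] at hmem
          exact hna hmem
        have hTBlt : (TB A B e).card < B.card :=
          Finset.card_lt_card ⟨Finset.filter_subset _ _, fun hsub => hb₁TB (hsub hb₁)⟩
        have hres := ih (TA A B e) (TB A B e) (by omega)
          (hA.mono Finset.subset_union_left) ⟨b₀, hb₀TB⟩ hnp'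
        have hsub := Finset.card_le_card (trans_subset A B e)
        have hc := trans_card A B e
        omega
      · push_neg at hex
        refine absurd (fun s hs => ?_) hnp
        obtain ⟨a₂, ha₂, b₀, hb₀, rfl⟩ := Finset.mem_add.mp hs
        by_cases hx : ∃ b₁ ∈ B, ∃ a ∈ A, a + b₁ - b₀ ∉ A
        · obtain ⟨b₁, hb₁, a, ha, hna⟩ := hx
          have hper := hex a ha b₀ hb₀ b₁ hb₁ hna
          have hsS' : a₂ + b₀ ∈ TA A B (a - b₀) + TB A B (a - b₀) := by
            refine Finset.add_mem_add (Finset.mem_union_left _ ha₂) ?_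
            rw [TB, Finset.mem_filter]
            refine ⟨hb₀, ?_⟩
            have : b₀ + (a - b₀) = a := by ring
            rwa [this]
          exact trans_subset A B (a - b₀) (hper _ hsS')
        · push_neg at hx
          obtain ⟨b₁, hb₁, hne⟩ := Finset.exists_mem_ne hcard2 b₀
          have hd : b₁ - b₀ ≠ 0 := sub_ne_zero.mpr hne
          have hstep : ∀ a ∈ A, a + (b₁ - b₀) ∈ A := by
            intro a ha
            have := hx b₁ hb₁ a ha
            rwa [add_sub_assoc] at this
          obtain ⟨k, hk⟩ := exists_nsmul_eq_hh hl _ hd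
          have hmem : a₂ + hh l ∈ A := by
            rw [← hk]; exact iterate_mem A _ hstep k a₂ ha₂
          have hfin : (a₂ + hh l) + b₀ ∈ A + B := Finset.add_mem_add hmem hb₀
          have heq : a₂ + b₀ + hh l = (a₂ + hh l) + b₀ := by ring
          rwa [heq]


lemma mem_pisum {G : Type*} [AddCommGroup G] [DecidableEq G] :
    ∀ (n : ℕ) (A : Fin n → Finset G) (s : G),
      s ∈ ∑ i, A i ↔ ∃ x : Fin n → G, (∀ i, x i ∈ A i) ∧ ∑ i, x i = s := by
  intro n
  induction n with
  | zero =>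
    intro A s
    simp only [Finset.univ_eq_empty, Finset.sum_empty, Finset.mem_zero]
    constructor
    · rintro rfl; exact ⟨Fin.elim0, fun i => i.elim0, rfl⟩
    · rintro ⟨x, -, rfl⟩; rfl
  | succ n ihn =>
    intro A s
    rw [Fin.sum_univ_castSucc (f := A), Finset.mem_add]
    constructor
    · rintro ⟨y, hy, z, hz, rfl⟩
      obtain ⟨x, hx, hxs⟩ := (ihn (fun i => A i.castSucc) y).mp hy
      refine ⟨Fin.snoc x z, fun i => ?_, ?_⟩
      · refine Fin.lastCases ?_ (fun j => ?_) i
        · simpa using hz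
        · simpa using hx j
      · rw [Fin.sum_univ_castSucc]
        simp only [Fin.snoc_castSucc, Fin.snoc_last]
        rw [hxs]
    · rintro ⟨x, hx, rfl⟩
      rw [Fin.sum_univ_castSucc (f := x)]
      refine ⟨∑ i : Fin n, x i.castSucc, ?_, x (Fin.last n), hx _, rfl⟩
      exact (ihn (fun i => A i.castSucc) _).mpr ⟨fun j => x j.castSucc, fun j => hx _, rfl⟩

lemma pisum_nonempty {G : Type*} [AddCommGroup G] [DecidableEq G]
    (n : ℕ) (A : Fin n → Finset G) (hA : ∀ i, (A i).Nonempty) :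
    (∑ i, A i).Nonempty := by
  refine ⟨∑ i, (hA i).choose, ?_⟩
  exact (mem_pisum n A _).mpr ⟨fun i => (hA i).choose, fun i => (hA i).choose_spec, rfl⟩

theorem knesern (hl : 1 ≤ l) :
    ∀ (n : ℕ) (A : Fin n → Finset (ZMod (2 ^ l))), (∀ i, (A i).Nonempty) →
      ¬ (∀ s ∈ ∑ i, A i, s + hh l ∈ ∑ i, A i) →
      (∑ i, (A i).card) + 1 ≤ (∑ i, A i).card + n := by
  intro n
  induction n with
  | zero =>
    intro A _ _
    simp only [Finset.univ_eq_empty, Finset.sum_empty, add_zero]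
    have : (0 : Finset (ZMod (2 ^ l))) = {0} := rfl
    rw [this, Finset.card_singleton]
  | succ n ihn =>
    intro A hA hnp
    rw [Fin.sum_univ_castSucc (f := A)] at hnp ⊢
    rw [Fin.sum_univ_castSucc (f := fun i => (A i).card)]
    set P := ∑ i : Fin n, A i.castSucc with hP
    have hPne : P.Nonempty := pisum_nonempty n _ (fun i => hA _)
    by_cases hPper : ∀ s ∈ P, s + hh l ∈ P
    · exfalso
      apply hnp
      intro s hs
      obtain ⟨p, hp, a, ha, rfl⟩ := Finset.mem_add.mp hs
      have h1 : (p + hh l) + a ∈ P + A (Fin.last n) :=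
        Finset.add_mem_add (hPper p hp) ha
      have heq : p + a + hh l = (p + hh l) + a := by ring
      rwa [heq]
    · have h1 := ihn _ (fun i => hA _) hPper
      rw [← hP] at h1
      have h2 := kneser2 hl ((A (Fin.last n)).card) P (A (Fin.last n)) le_rfl hPne (hA _) hnp
      omega


/-- mod/div arithmetic: for `2^(l-1) ∣ m`,
`m % 2^l = 2^(l-1) * ((m / 2^(l-1)) % 2)`. -/
lemma mod_two_pow (l m : ℕ) (hl : 1 ≤ l) (hdvd : 2 ^ (l - 1) ∣ m) :
    m % 2 ^ l = 2 ^ (l - 1) * ((m / 2 ^ (l - 1)) % 2) := by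
  obtain ⟨q, rfl⟩ := hdvd
  have hq : 2 ^ (l - 1) * q / 2 ^ (l - 1) = q :=
    Nat.mul_div_cancel_left q (pow_pos two_pos _)
  rw [hq]
  have h2l : 2 ^ l = 2 ^ (l - 1) * 2 := by
    rw [← pow_succ]; congr 1; omega
  rw [h2l, Nat.mul_mod_mul_left]

end Stmt11Aux

open Stmt11Aux in
/-- Key rectangle bound: a `b`-monochromatic rectangle `R = R₁ × ⋯ × Rₙ` meeting
`D = {X : 2^{l−1} ∣ Σ Xᵢ}` satisfies `|R| ≤ ((2^l − 2)/n + 1)ⁿ`. -/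
theorem stmt11 (n l : ℕ) (hn : 2 ≤ n) (hl : 1 ≤ l) (b : ℕ) (hb : b = 0 ∨ b = 1)
    (R : Fin n → Finset (Fin (2 ^ l)))
    (hne : ∃ X ∈ Fintype.piFinset R, (∑ i, (X i : ℕ)) % 2 ^ (l - 1) = 0)
    (hmono : ∀ X ∈ Fintype.piFinset R, (∑ i, (X i : ℕ)) % 2 ^ (l - 1) = 0 →
      ((∑ i, (X i : ℕ)) % 2 ^ l) / 2 ^ (l - 1) = b) :
    ((Fintype.piFinset R).card : ℝ) ≤ (((2 ^ l : ℝ) - 2) / n + 1) ^ n := by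
  classical
  obtain ⟨X₀, hX₀, hdvd0⟩ := hne
  have hX₀mem : ∀ i, X₀ i ∈ R i := Fintype.mem_piFinset.mp hX₀
  have hRne : ∀ i, (R i).Nonempty := fun i => ⟨X₀ i, hX₀mem i⟩
  set f : Fin (2 ^ l) → ZMod (2 ^ l) := fun x => ((x : ℕ) : ZMod (2 ^ l)) with hf
  have hfinj : Function.Injective f := by
    intro x y hxy
    have hx := ZMod.val_cast_of_lt (a := (x : ℕ)) x.isLt
    have hy := ZMod.val_cast_of_lt (a := (y : ℕ)) y.isLt
    apply Fin.ext
    have : ((x:ℕ) : ZMod (2^l)).val = ((y:ℕ) : ZMod (2^l)).val := by rw [show ((x:ℕ):ZMod (2^l)) = f x from rfl, show ((y:ℕ):ZMod (2^l)) = f y from rfl, hxy]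
    rwa [hx, hy] at this
  set A : Fin n → Finset (ZMod (2 ^ l)) := fun i => (R i).image f with hA
  have hAcard : ∀ i, (A i).card = (R i).card := fun i =>
    Finset.card_image_of_injective _ hfinj
  have hAne : ∀ i, (A i).Nonempty := fun i => ((hRne i).image f)
  set S : Finset (ZMod (2 ^ l)) := ∑ i, A i with hS
  -- from any element of S, recover a rectangle point
  have hrecov : ∀ s ∈ S, ∃ X, (X ∈ Fintype.piFinset R) ∧
      (((∑ i, (X i : ℕ) : ℕ) : ZMod (2 ^ l)) = s) := by
    intro s hs
    obtain ⟨x, hx, hxs⟩ := (mem_pisum n A s).mp hs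
    have hchoice : ∀ i, ∃ r, r ∈ R i ∧ f r = x i := by
      intro i
      obtain ⟨r, hr, hrx⟩ := Finset.mem_image.mp (hx i)
      exact ⟨r, hr, hrx⟩
    choose X hXR hXx using hchoice
    refine ⟨X, Fintype.mem_piFinset.mpr hXR, ?_⟩
    rw [Nat.cast_sum]
    rw [← hxs]
    exact Finset.sum_congr rfl fun i _ => hXx i
  -- key: any rectangle point whose sum is ≡ 0 mod 2^(l-1) has bit b
  -- used to show that 0 ∈ S and hh l ∈ S both determine b
  have h0S : (0 : ZMod (2 ^ l)) ∈ S → b = 0 := by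
    intro h0
    obtain ⟨X, hXp, hXs⟩ := hrecov _ h0
    set m := ∑ i, (X i : ℕ) with hm
    have hdl : 2 ^ l ∣ m := (ZMod.natCast_eq_zero_iff _ _).mp hXs
    obtain ⟨c, hc⟩ := dvd_trans (pow_dvd_pow 2 (show l - 1 ≤ l by omega)) hdl
    have hmod : m % 2 ^ (l - 1) = 0 := by rw [hc]; exact Nat.mul_mod_right _ _
    have hbit := hmono X hXp hmod
    obtain ⟨c', hc'⟩ := hdl
    have hml : m % 2 ^ l = 0 := by rw [hc']; exact Nat.mul_mod_right _ _
    rw [hml] at hbit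
    simpa using hbit.symm
  have hhS : hh l ∈ S → b = 1 := by
    intro h1
    obtain ⟨X, hXp, hXs⟩ := hrecov _ h1
    set m := ∑ i, (X i : ℕ) with hm
    have hcong : m ≡ 2 ^ (l - 1) [MOD 2 ^ l] := (ZMod.natCast_eq_natCast_iff _ _ _).mp hXs
    have hlt : 2 ^ (l - 1) < 2 ^ l := pow_lt_pow_right₀ one_lt_two (by omega)
    have hml : m % 2 ^ l = 2 ^ (l - 1) := by
      have := hcong.symm
      rw [Nat.ModEq] at this
      rw [← this, Nat.mod_eq_of_lt hlt]
    have hdl1 : 2 ^ (l - 1) ∣ m := by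
      have h1' : m = 2 ^ l * (m / 2 ^ l) + m % 2 ^ l := (Nat.div_add_mod m _).symm
      rw [hml] at h1'
      rw [h1']
      exact dvd_add (Dvd.dvd.mul_right (pow_dvd_pow 2 (by omega)) _) dvd_rfl
    have hmod : m % 2 ^ (l - 1) = 0 := by
      obtain ⟨c, hcc⟩ := hdl1
      rw [hcc]; exact Nat.mul_mod_right _ _
    have hbit := hmono X hXp hmod
    rw [hml, Nat.div_self (pow_pos two_pos _)] at hbit
    omega
  -- main cardinality bound
  have hsum : (∑ i, (R i).card) + 2 ≤ 2 ^ l + n := by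
    by_contra hbig
    push_neg at hbig
    -- both 0 and hh l lie in S, contradiction
    have hboth : (0 : ZMod (2 ^ l)) ∈ S ∧ hh l ∈ S := by
      -- s₀ := cast of the witness sum is in S and is 0 or hh l
      have hs₀S : ((∑ i, (X₀ i : ℕ) : ℕ) : ZMod (2 ^ l)) ∈ S := by
        rw [Nat.cast_sum]
        exact (mem_pisum n A _).mpr ⟨fun i => f (X₀ i),
          fun i => Finset.mem_image_of_mem f (hX₀mem i), rfl⟩
      set m₀ := ∑ i, (X₀ i : ℕ) with hm₀
      have hdvd1 : 2 ^ (l - 1) ∣ m₀ := Nat.dvd_of_mod_eq_zero hdvd0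
      have hcast : ((m₀ : ℕ) : ZMod (2 ^ l)) = (((m₀ % 2 ^ l : ℕ)) : ZMod (2 ^ l)) := by
        rw [ZMod.natCast_mod]
      have hmm := mod_two_pow l m₀ hl hdvd1
      have hs01 : ((m₀ : ℕ) : ZMod (2 ^ l)) = 0 ∨ ((m₀ : ℕ) : ZMod (2 ^ l)) = hh l := by
        rcases Nat.mod_two_eq_zero_or_one (m₀ / 2 ^ (l - 1)) with hq | hq
        · left; rw [hcast, hmm, hq, Nat.mul_zero, Nat.cast_zero]
        · right; rw [hcast, hmm, hq, Nat.mul_one]; rfl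
      by_cases hper : ∀ s ∈ S, s + hh l ∈ S
      · rcases hs01 with h | h
        · rw [h] at hs₀S
          refine ⟨hs₀S, ?_⟩
          have := hper _ hs₀S
          rwa [zero_add] at this
        · rw [h] at hs₀S
          refine ⟨?_, hs₀S⟩
          have := hper _ hs₀S
          rwa [hh_add_hh hl] at this
      · have hkn := knesern hl n A hAne hper
        rw [← hS] at hkn
        have hAc : ∑ i, (A i).card = ∑ i, (R i).card :=
          Finset.sum_congr rfl fun i _ => hAcard i
        rw [hAc] at hkn
        have hle : S.card ≤ Fintype.card (ZMod (2 ^ l)) := Finset.card_le_univ S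
        have hge : Fintype.card (ZMod (2 ^ l)) ≤ S.card := by
          rw [ZMod.card]; omega
        have : S = Finset.univ := Finset.eq_univ_of_card S (le_antisymm hle hge)
        rw [this]
        exact ⟨Finset.mem_univ _, Finset.mem_univ _⟩
    have hb0 := h0S hboth.1
    have hb1 := hhS hboth.2
    omega
  -- now the real-number estimate
  have hn0 : (n : ℝ) ≠ 0 := Nat.cast_ne_zero.mpr (by omega)
  have hnpos : (0 : ℝ) < n := by positivity
  set c : Fin n → ℝ := fun i => ((R i).card : ℝ) with hc
  have hcnn : ∀ i ∈ Finset.univ, (0 : ℝ) ≤ c i := fun i _ => Nat.cast_nonneg _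
  have hw : ∀ i ∈ (Finset.univ : Finset (Fin n)), (0:ℝ) ≤ 1 / (n:ℝ) := fun i _ => by positivity
  have hw1 : ∑ _i : Fin n, (1 / (n:ℝ)) = 1 := by
    rw [Finset.sum_const, Finset.card_univ, Fintype.card_fin, nsmul_eq_mul]
    field_simp
  have hamgm := Real.geom_mean_le_arith_mean_weighted Finset.univ
    (fun _ => 1 / (n:ℝ)) c hw hw1 hcnn
  -- rewrite LHS
  have hprod : (∏ i, c i ^ (1 / (n:ℝ))) ^ n = ∏ i, c i := by
    rw [← Finset.prod_pow]
    refine Finset.prod_congr rfl fun i _ => ?_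
    rw [← Real.rpow_natCast (c i ^ (1 / (n:ℝ))) n, ← Real.rpow_mul (Nat.cast_nonneg _)]
    rw [one_div_mul_cancel hn0, Real.rpow_one]
  have hsumR : (∑ i, c i) + 2 ≤ (2:ℝ) ^ l + n := by
    have : ((∑ i, (R i).card : ℕ) : ℝ) + 2 ≤ ((2 ^ l + n : ℕ) : ℝ) := by
      exact_mod_cast hsum
    rw [Nat.cast_sum] at this
    push_cast at this
    exact this
  have hmean : ∑ i, (1 / (n:ℝ)) * c i ≤ ((2:ℝ) ^ l - 2) / n + 1 := by
    have h1 : ∑ i, (1 / (n:ℝ)) * c i = (∑ i, c i) / n := by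
      rw [Finset.sum_div]
      exact Finset.sum_congr rfl fun i _ => by ring
    rw [h1]
    have h2 : ((2:ℝ) ^ l - 2) / n + 1 = ((2:ℝ) ^ l + n - 2) / n := by
      field_simp
      ring
    rw [h2]
    have h3 : (∑ i, c i) ≤ (2:ℝ) ^ l + n - 2 := by linarith
    exact (div_le_div_iff_of_pos_right hnpos).mpr h3
  have hcardeq : ((Fintype.piFinset R).card : ℝ) = ∏ i, c i := by
    rw [Fintype.card_piFinset]
    rw [Nat.cast_prod]
  rw [hcardeq]
  have hL : (0:ℝ) ≤ ∏ i, c i ^ (1 / (n:ℝ)) :=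
    Finset.prod_nonneg fun i _ => Real.rpow_nonneg (Nat.cast_nonneg _) _
  calc ∏ i, c i = (∏ i, c i ^ (1 / (n:ℝ))) ^ n := hprod.symm
  _ ≤ (∑ i, (1 / (n:ℝ)) * c i) ^ n := pow_le_pow_left₀ hL hamgm n
  _ ≤ (((2:ℝ) ^ l - 2) / n + 1) ^ n := by
      apply pow_le_pow_left₀ ?_ hmean n
      exact Finset.sum_nonneg fun i hi => mul_nonneg (hw i hi) (hcnn i hi)
end

section
/- With r ≤ ((2^l − 2)/n + 1)ⁿ, |D| = 2^{(n−1)l}, d = 2, and l = ⌈log₂ n⌉, the bound d·(r/|D|)^{1/n} is at most 8/n for all n ≥ 3. Hence the maximum detector efficiency for the GHZ correlation problem satisfies η* ≤ 8/n. -/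
lemma two_mul_le_two_pow' (n : ℕ) (hn : 2 ≤ n) : 2 * n ≤ 2 ^ n := by
  induction n with
  | zero => omega
  | succ k ih =>
    rcases Nat.lt_or_ge k 2 with h | h
    · interval_cases k <;> omega
    · have h1 := ih h
      have h2 : 2 ≤ 2 ^ k := Nat.one_lt_two_pow_iff.mpr (by omega)
      have h3 : 2 ^ (k + 1) = 2 ^ k + 2 ^ k := by ring
      omega

/-- With `r ≤ ((2^l − 2)/n + 1)ⁿ`, `|D| = 2^{(n−1)l}`, `d = 2` and `l = ⌈log₂ n⌉`,
the bound `d·(r/|D|)^{1/n}` is at most `8/n` for all `n ≥ 3`; hence `η* ≤ 8/n`. -/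
theorem stmt15 (n l : ℕ) (hn : 3 ≤ n) (h1 : n ≤ 2 ^ l) (h2 : 2 ^ l < 2 * n)
    (r : ℝ) (hr0 : 0 ≤ r) (hr : r ≤ (((2 ^ l : ℝ) - 2) / n + 1) ^ n) :
    2 * (r / 2 ^ ((n - 1) * l)) ^ ((1 : ℝ) / n) ≤ 8 / n := by
  have hn0 : (0:ℝ) < n := by positivity
  have hn3 : (3:ℝ) ≤ n := by exact_mod_cast hn
  set T : ℝ := (2:ℝ) ^ l with hTdef
  have hT0 : (0:ℝ) < T := by positivity
  have hT : (n:ℝ) ≤ T := by rw [hTdef]; exact_mod_cast h1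
  have hTn : T ≤ 2 ^ n := by
    have h3 : (2:ℕ) ^ l ≤ 2 ^ n := le_trans (le_of_lt h2) (two_mul_le_two_pow' n (by omega))
    rw [hTdef]; exact_mod_cast h3
  have hbase0 : (0:ℝ) ≤ (T - 2) / n + 1 := by
    have : (0:ℝ) ≤ (T - 2) / n := by
      apply div_nonneg _ (le_of_lt hn0); linarith
    linarith
  have hbase : ((T - 2) / n + 1) ≤ 2 * T / n := by
    rw [div_add' _ _ _ (ne_of_gt hn0)]
    gcongr
    linarith
  have hpow : ((T - 2) / n + 1) ^ n ≤ (4 / n) ^ n * T ^ (n - 1) := by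
    calc ((T - 2) / n + 1) ^ n ≤ (2 * T / n) ^ n := pow_le_pow_left₀ hbase0 hbase n
      _ = (2 / n) ^ n * (T ^ (n - 1) * T) := by
          rw [← pow_succ, Nat.sub_add_cancel (by omega), ← mul_pow]
          congr 1
          ring
      _ ≤ (2 / n) ^ n * (T ^ (n - 1) * 2 ^ n) := by
          gcongr
      _ = (4 / n) ^ n * T ^ (n - 1) := by
          rw [show (4:ℝ)/n = (2/n)*2 by ring, mul_pow]
          ring
  have hDeq : (2:ℝ) ^ ((n - 1) * l) = T ^ (n - 1) := by
    rw [hTdef, ← pow_mul, mul_comm]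
  have hA : r / 2 ^ ((n - 1) * l) ≤ (4 / n) ^ n := by
    rw [hDeq, div_le_iff₀ (by positivity)]
    exact hr.trans hpow
  have hA0 : 0 ≤ r / 2 ^ ((n - 1) * l) := by positivity
  have hrp := Real.rpow_le_rpow hA0 hA (by positivity : (0:ℝ) ≤ 1 / n)
  have heq : (((4 / n : ℝ)) ^ n) ^ ((1:ℝ) / n) = 4 / n := by
    rw [← Real.rpow_natCast (4 / (n:ℝ)) n, ← Real.rpow_mul (by positivity),
      mul_one_div, div_self (ne_of_gt hn0), Real.rpow_one]
  rw [heq] at hrp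
  calc 2 * (r / 2 ^ ((n - 1) * l)) ^ ((1:ℝ) / n) ≤ 2 * (4 / n) := by linarith
    _ = 8 / n := by ring
end
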